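/- Let M be an end-component of an MDP graph G, let d be a node of a tree decomposition of G with bag B_d such that M ∩ B_d ≠ ∅, and let G_d be the subgraph induced on the union of bags in the subtree rooted at d. Then M ∩ V(G_d) satisfies: (1) for every v ∈ M ∩ V(G_d) ∩ VP and every edge vu of G_d, u ∈ M ∩ V(G_d); (2) for every v ∈ M ∩ V(G_d) there exists a directed path within M ∩ V(G_d) from v to some vertex of M ∩ B_d; (3) for every v ∈ M ∩ V(G_d) there exists a directed path within M ∩ V(G_d) from some vertex of M ∩ B_d to v. -/
import Mathlib


/-- Directed reachability within a vertex set `Q`. -/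
def ReachIn {V : Type*} (E : V → V → Prop) (Q : Set V) : V → V → Prop :=
  Relation.ReflTransGen (fun x y => x ∈ Q ∧ y ∈ Q ∧ E x y)

/-- An end-component of an MDP graph. -/
def IsEndComponent {V : Type*} (E : V → V → Prop) (VP : Set V) (U : Set V) : Prop :=
  U.Nonempty ∧ (∀ u ∈ U, ∀ v ∈ U, ReachIn E U u v) ∧
    (∀ u ∈ U, u ∈ VP → ∀ v, E u v → v ∈ U)

private lemma fwd_aux {V : Type*} (E : V → V → Prop) (Vd Bd : Set V)
    (hsep : ∀ x y, (E x y ∨ E y x) → x ∈ Vd → x ∉ Bd → y ∈ Vd)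
    (M : Set V) {v b : V} (h : ReachIn E M v b) (hv : v ∈ Vd) (hb : b ∈ M ∩ Bd) :
    ∃ c ∈ M ∩ Bd, ReachIn E (M ∩ Vd) v c := by
  induction h using Relation.ReflTransGen.head_induction_on with
  | refl => exact ⟨b, hb, Relation.ReflTransGen.refl⟩
  | @head x y hxy htl ih =>
    by_cases hxB : x ∈ Bd
    · exact ⟨x, ⟨hxy.1, hxB⟩, Relation.ReflTransGen.refl⟩
    · have hy : y ∈ Vd := hsep x y (Or.inl hxy.2.2) hv hxB
      obtain ⟨c, hc, hreach⟩ := ih hy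
      exact ⟨c, hc, Relation.ReflTransGen.head ⟨⟨hxy.1, hv⟩, ⟨hxy.2.1, hy⟩, hxy.2.2⟩ hreach⟩

private lemma bwd_aux {V : Type*} (E : V → V → Prop) (Vd Bd : Set V)
    (hsep : ∀ x y, (E x y ∨ E y x) → x ∈ Vd → x ∉ Bd → y ∈ Vd)
    (M : Set V) {b v : V} (h : ReachIn E M b v) (hb : b ∈ M ∩ Bd) (hv : v ∈ Vd) :
    ∃ c ∈ M ∩ Bd, ReachIn E (M ∩ Vd) c v := by
  induction h with
  | refl => exact ⟨b, hb, Relation.ReflTransGen.refl⟩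
  | @tail x y hxv hxy ih =>
    by_cases hyB : y ∈ Bd
    · exact ⟨y, ⟨hxy.2.1, hyB⟩, Relation.ReflTransGen.refl⟩
    · have hx : x ∈ Vd := hsep y x (Or.inr hxy.2.2) hv hyB
      obtain ⟨c, hc, hreach⟩ := ih hx
      exact ⟨c, hc, Relation.ReflTransGen.tail hreach ⟨⟨hxy.1, hx⟩, ⟨hxy.2.1, hv⟩, hxy.2.2⟩⟩

/-- For an end-component `M` meeting the bag `Bd` of a node `d` of a tree
decomposition, the intersection `M ∩ V(G_d)` is closed under `G_d`-edges leaving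
probabilistic vertices, and each of its vertices is connected to `M ∩ Bd` by
directed paths inside `M ∩ V(G_d)` in both directions. Here `Vd = V(G_d)` is the
union of bags of the subtree rooted at `d`, and the key separation property of
tree decompositions is available as the hypothesis `hsep`: no edge of `G` (in
either direction) connects `Vd \ Bd` with the outside of `Vd`. -/
theorem stmt19 {V : Type*} [Fintype V] (E : V → V → Prop) (V1 VP : Set V)
    (hpart : ∀ v, (v ∈ V1 ∧ v ∉ VP) ∨ (v ∉ V1 ∧ v ∈ VP))
    (Vd Bd : Set V) (hBd : Bd ⊆ Vd)
    (hsep : ∀ x y, (E x y ∨ E y x) → x ∈ Vd → x ∉ Bd → y ∈ Vd)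
    (M : Set V) (hM : IsEndComponent E VP M) (hMBd : (M ∩ Bd).Nonempty) :
    (∀ v ∈ M ∩ Vd, v ∈ VP → ∀ u, E v u → u ∈ Vd → u ∈ M ∩ Vd) ∧
    (∀ v ∈ M ∩ Vd, ∃ b ∈ M ∩ Bd, ReachIn E (M ∩ Vd) v b) ∧
    (∀ v ∈ M ∩ Vd, ∃ b ∈ M ∩ Bd, ReachIn E (M ∩ Vd) b v) := by
  obtain ⟨b0, hb0⟩ := hMBd
  obtain ⟨_, hconn, hclosed⟩ := hM
  refine ⟨fun v hv hvP u hEu hu => ⟨hclosed v hv.1 hvP u hEu, hu⟩, ?_, ?_⟩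
  · intro v hv
    exact fwd_aux E Vd Bd hsep M (hconn v hv.1 b0 hb0.1) hv.2 hb0
  · intro v hv
    exact bwd_aux E Vd Bd hsep M (hconn b0 hb0.1 v hv.1) hb0 hv.2
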